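/- arXiv:2303.04500 — 5 statements merged into one kernel-verified Lean document; each statement's English description precedes it below -/
import Mathlib

section
/- Correctness (completeness) of proof of presence for hash lists: if represents(ℓ, h) and R is a member of ℓ, then there exists a proof π such that verifyPP(π, R, h) holds. -/
inductive Represents {Λ Δ : Type*} (H : Λ × Δ → Δ) (h0 : Δ) : List Λ → Δ → Prop
  | nil : Represents H h0 [] h0
  | cons {ℓ : List Λ} {h : Δ} (R : Λ) :
      Represents H h0 ℓ h → Represents H h0 (R :: ℓ) (H (R, h))

inductive VerifyPP {Λ Δ : Type*} (H : Λ × Δ → Δ) : List Λ × Δ → Λ → Δ → Prop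
  | base (R : Λ) (h' : Δ) : VerifyPP H ([], h') R (H (R, h'))
  | cons {ℓ : List Λ} {h' h : Δ} {R : Λ} (Q : Λ) :
      VerifyPP H (ℓ, h') R h → VerifyPP H (Q :: ℓ, h') R (H (Q, h))

inductive VerifyPE {Λ Δ : Type*} (H : Λ × Δ → Δ) : List Λ → Δ → Δ → Prop
  | nil (h : Δ) : VerifyPE H [] h h
  | cons {ℓ : List Λ} {h1 h2 : Δ} (R : Λ) :
      VerifyPE H ℓ h1 h2 → VerifyPE H (R :: ℓ) h1 (H (R, h2))

theorem verifyPP_complete {Λ Δ : Type*} (H : Λ × Δ → Δ) (h0 : Δ)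
    (ℓ : List Λ) (h : Δ) (R : Λ)
    (hrep : Represents H h0 ℓ h) (hmem : R ∈ ℓ) :
    ∃ π : List Λ × Δ, VerifyPP H π R h := by
  induction hrep with
  | nil => cases hmem
  | cons Q hrec ih =>
    rcases List.mem_cons.mp hmem with rfl | hm
    · rename_i ℓ' h'
      exact ⟨([], h'), VerifyPP.base R h'⟩
    · obtain ⟨⟨ℓ'', h''⟩, hπ⟩ := ih hm
      exact ⟨(Q :: ℓ'', h''), VerifyPP.cons Q hπ⟩
end

section
/- Soundness of proof of presence for hash lists: if H is injective (as a function of the pair of arguments), H never outputs h0, and represents(ℓ, h) and verifyPP(π, R, h) both hold, then R is a member of ℓ. -/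
/-! Since `H` is injective and misses `h0`, a hash `H (Q, x)` represents only lists of the form
`Q :: ℓ'` with `ℓ'` represented by `x`. Peeling the proof of presence and the list in lockstep
therefore lines `R` up with an entry of the list. -/

theorem Represents.exists_eq_cons {Λ Δ : Type*} {H : Λ × Δ → Δ} {h0 : Δ}
    (hinj : Function.Injective H) (hne : ∀ x : Λ × Δ, H x ≠ h0)
    {ℓ : List Λ} {Q : Λ} {x : Δ} (hrep : Represents H h0 ℓ (H (Q, x))) :
    ∃ ℓ', ℓ = Q :: ℓ' ∧ Represents H h0 ℓ' x := by
  generalize hE : H (Q, x) = y at hrep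
  cases hrep with
  | nil => exact absurd hE (hne _)
  | cons R hrep' =>
    obtain ⟨rfl, rfl⟩ := Prod.mk.inj (hinj hE.symm)
    exact ⟨_, rfl, hrep'⟩

theorem verifyPP_sound {Λ Δ : Type*} (H : Λ × Δ → Δ) (h0 : Δ)
    (hinj : Function.Injective H) (hne : ∀ x : Λ × Δ, H x ≠ h0)
    (ℓ : List Λ) (h : Δ) (R : Λ) (π : List Λ × Δ)
    (hrep : Represents H h0 ℓ h) (hpp : VerifyPP H π R h) :
    R ∈ ℓ := by
  induction hpp generalizing ℓ with
  | base R h' =>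
    obtain ⟨ℓ', rfl, -⟩ := hrep.exists_eq_cons hinj hne
    exact List.mem_cons_self
  | cons Q _ ih =>
    obtain ⟨ℓ', rfl, hrep'⟩ := hrep.exists_eq_cons hinj hne
    exact List.mem_cons_of_mem Q (ih ℓ' hrep')
end

section
/- Extension implies suffix for hash lists: if H is injective, h0 ∉ range(H), represents(ℓ1, h1), represents(ℓ2, h2), and verifyPE(ρ, h1, h2), then ℓ1 is a suffix of ℓ2 (i.e., ℓ2 = ρ ++ ℓ1 after identifying ρ with its list of elements). -/
theorem represents_unique {Λ Δ : Type*} {H : Λ × Δ → Δ} {h0 : Δ}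
    (hinj : Function.Injective H) (hne : ∀ x : Λ × Δ, H x ≠ h0)
    {ℓ ℓ' : List Λ} {h : Δ}
    (ha : Represents H h0 ℓ h) (hb : Represents H h0 ℓ' h) : ℓ = ℓ' := by
  induction ha generalizing ℓ' with
  | nil =>
    cases hb with
    | nil => rfl
    | cons R hb => exact absurd rfl (hne _)
  | cons R ha ih =>
    rename_i h
    generalize hE : H (R, h) = x at hb ⊢
    cases hb with
    | nil => exact absurd hE (hne _)
    | cons Q hb =>
      rename_i h'' 
      obtain ⟨rfl, rfl⟩ : R = Q ∧ h = h'' := by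
        have := hinj hE
        simpa using this
      rw [ih hb]

theorem extension_implies_suffix {Λ Δ : Type*} (H : Λ × Δ → Δ) (h0 : Δ)
    (hinj : Function.Injective H) (hne : ∀ x : Λ × Δ, H x ≠ h0)
    (ℓ1 ℓ2 ρ : List Λ) (h1 h2 : Δ)
    (hr1 : Represents H h0 ℓ1 h1) (hr2 : Represents H h0 ℓ2 h2)
    (hpe : VerifyPE H ρ h1 h2) :
    ℓ2 = ρ ++ ℓ1 := by
  induction hpe generalizing ℓ2 with
  | nil h => exact represents_unique hinj hne hr2 hr1
  | cons R hpe ih =>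
    rename_i h2'
    generalize hE : H (R, h2') = x at hr2
    cases hr2 with
    | nil => exact absurd hE (hne _)
    | cons Q hr2' =>
      rename_i h''
      obtain ⟨rfl, rfl⟩ : R = Q ∧ h2' = h'' := by
        have := hinj hE
        simpa using this
      rw [ih _ hr1 hr2']
      rfl
end

section
/- Merkle-tree proof-of-presence completeness: if R is a leaf of a binary tree t, then there exists a path list π (of (direction, sibling-digest) pairs) such that verifyPP(π, R, hash t) holds. -/
inductive BTree (Λ : Type*) where
  | leaf (R : Λ) : BTree Λ
  | node (t1 t2 : BTree Λ) : BTree Λ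

def BTree.hashT {Λ Δ : Type*} (H : Δ × Δ → Δ) (f : Λ → Δ) (h0 : Δ) : BTree Λ → Δ
  | .leaf R => H (f R, h0)
  | .node t1 t2 => H (t1.hashT H f h0, t2.hashT H f h0)

def BTree.leaves {Λ : Type*} : BTree Λ → List Λ
  | .leaf R => [R]
  | .node t1 t2 => t1.leaves ++ t2.leaves

inductive Dir where
  | left : Dir
  | right : Dir

inductive VerifyPPM {Λ Δ : Type*} (H : Δ × Δ → Δ) (f : Λ → Δ) (h0 : Δ) :
    List (Dir × Δ) → Λ → Δ → Prop
  | nil (R : Λ) : VerifyPPM H f h0 [] R (H (f R, h0))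
  | left {ℓ : List (Dir × Δ)} {R : Λ} {hl : Δ} (hr : Δ) :
      VerifyPPM H f h0 ℓ R hl → VerifyPPM H f h0 ((Dir.left, hr) :: ℓ) R (H (hl, hr))
  | right {ℓ : List (Dir × Δ)} {R : Λ} {hr : Δ} (hl : Δ) :
      VerifyPPM H f h0 ℓ R hr → VerifyPPM H f h0 ((Dir.right, hl) :: ℓ) R (H (hl, hr))

theorem merkle_verifyPP_complete {Λ Δ : Type*} (H : Δ × Δ → Δ) (f : Λ → Δ) (h0 : Δ)
    (t : BTree Λ) (R : Λ) (hmem : R ∈ t.leaves) :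
    ∃ π : List (Dir × Δ), VerifyPPM H f h0 π R (t.hashT H f h0) := by
  induction t with
  | leaf R' =>
    simp [BTree.leaves] at hmem
    subst hmem
    exact ⟨[], VerifyPPM.nil R⟩
  | node t1 t2 ih1 ih2 =>
    simp [BTree.leaves] at hmem
    rcases hmem with h | h
    · obtain ⟨π, hπ⟩ := ih1 h
      exact ⟨(Dir.left, t2.hashT H f h0) :: π, VerifyPPM.left _ hπ⟩
    · obtain ⟨π, hπ⟩ := ih2 h
      exact ⟨(Dir.right, t1.hashT H f h0) :: π, VerifyPPM.right _ hπ⟩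
end

section
/- Uniqueness of presence proofs for hash lists: if H is injective and verifyPP(π1, R, h) and verifyPP(π2, R, h) hold with π1 = (ℓ1, h1') and π2 = (ℓ2, h2') and ℓ1, ℓ2 have the same length, then π1 = π2. -/
lemma verifyPP_inv_nil {Λ Δ : Type*} {H : Λ × Δ → Δ} {h' h : Δ} {R : Λ}
    (hp : VerifyPP H ([], h') R h) : h = H (R, h') := by
  cases hp; rfl

lemma verifyPP_inv_cons {Λ Δ : Type*} {H : Λ × Δ → Δ} {Q : Λ} {ℓ : List Λ} {h' h : Δ} {R : Λ}
    (hp : VerifyPP H (Q :: ℓ, h') R h) :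
    ∃ h0, h = H (Q, h0) ∧ VerifyPP H (ℓ, h') R h0 := by
  cases hp with
  | cons _ hp' => exact ⟨_, rfl, hp'⟩

lemma verifyPP_unique_aux {Λ Δ : Type*} (H : Λ × Δ → Δ)
    (hinj : Function.Injective H) :
    ∀ (ℓ1 : List Λ) (ℓ2 : List Λ) (h1' h2' h : Δ) (R : Λ),
    VerifyPP H (ℓ1, h1') R h → VerifyPP H (ℓ2, h2') R h →
    ℓ1.length = ℓ2.length → (ℓ1, h1') = (ℓ2, h2') := by
  intro ℓ1
  induction ℓ1 with
  | nil =>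
    intro ℓ2 h1' h2' h R hpp1 hpp2 hlen
    cases ℓ2 with
    | nil =>
      have e1 := verifyPP_inv_nil hpp1
      have e2 := verifyPP_inv_nil hpp2
      have := hinj (e1 ▸ e2)
      simp_all
    | cons => simp at hlen
  | cons a t ih =>
    intro ℓ2 h1' h2' h R hpp1 hpp2 hlen
    cases ℓ2 with
    | nil => simp at hlen
    | cons b t2 =>
      obtain ⟨x1, rfl, hp1⟩ := verifyPP_inv_cons hpp1
      obtain ⟨x2, e2, hp2⟩ := verifyPP_inv_cons hpp2
      have := hinj e2
      obtain ⟨rfl, rfl⟩ : b = a ∧ x2 = x1 := by simpa using this.symm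
      have := ih t2 h1' h2' _ R hp1 hp2 (by simpa using hlen)
      simp_all

theorem verifyPP_unique {Λ Δ : Type*} (H : Λ × Δ → Δ)
    (hinj : Function.Injective H)
    (ℓ1 ℓ2 : List Λ) (h1' h2' h : Δ) (R : Λ)
    (hpp1 : VerifyPP H (ℓ1, h1') R h) (hpp2 : VerifyPP H (ℓ2, h2') R h)
    (hlen : ℓ1.length = ℓ2.length) :
    (ℓ1, h1') = (ℓ2, h2') := by exact verifyPP_unique_aux H hinj ℓ1 ℓ2 h1' h2' h R hpp1 hpp2 hlen
end
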